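/- Let Ω ⊂ ℝⁿ be a bounded domain whose boundary ∂Ω is an m-set, with 0 < m ≤ n, and let d(x) = dist(x, ∂Ω). If −(n−m) < μ < (n−m)(p−1) for some 1 < p < ∞, then the weight w(x) = d(x)^μ belongs to the Muckenhaupt class A_p on ℝⁿ; that is, sup over balls B of (|B|⁻¹∫_B d^μ)(|B|⁻¹∫_B d^{−μ/(p−1)})^{p−1} is finite. -/

import Mathlib

open MeasureTheory

/-- `F` is an m-set with constant `C`. -/
def IsMSet {n : ℕ} (m : ℝ) (C : ℝ) (F : Set (EuclideanSpace ℝ (Fin n))) : Prop :=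
  0 < C ∧ ∀ x ∈ F, ∀ ρ : ℝ, 0 < ρ → ρ ≤ Metric.diam F →
    ENNReal.ofReal (C⁻¹ * ρ ^ m) < μH[m] (Metric.ball x ρ ∩ F) ∧
    μH[m] (Metric.ball x ρ ∩ F) < ENNReal.ofReal (C * ρ ^ m)

/-!
Write `F = ∂Ω` and `d = dist(·, F)`. A Vitali covering of `F` by balls of radius `t/2`, counted
with the two Ahlfors bounds of the m-set, shows that neighbourhoods of `F` are thin:
`|B(x,r) ∩ {d ≤ t}| ≲ (t/r)^(n-m) |B(x,r)|` for `t ≤ r`. Summing over the dyadic layers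
`{d ≈ 2^(-k) r}` then gives `⨍_{B(x,r)} d^γ ≲ (r + d(x))^γ` for every `γ > -(n-m)`; for `γ ≥ 0`,
and for balls with `d(x) ≥ 2r`, this already holds pointwise. Both `μ` and `-μ/(p-1)` exceed
`-(n-m)`, and the powers of `r + d(x)` cancel in the `A_p` product.
-/

open Metric
open scoped ENNReal

section Average

variable {α : Type*} [MeasurableSpace α] {μ : Measure α} {s : Set α} {f : α → ℝ} {c : ℝ}

theorem setAverage_nonneg (hf₀ : ∀ x, 0 ≤ f x) : 0 ≤ ⨍ x in s, f x ∂μ := by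
  rw [setAverage_eq, smul_eq_mul]
  exact mul_nonneg (inv_nonneg.2 measureReal_nonneg) (integral_nonneg hf₀)

theorem setAverage_le_of_setLIntegral_le (hf : Measurable f) (hf₀ : ∀ x, 0 ≤ f x)
    (hs : μ s ≠ ∞) (hc : 0 ≤ c)
    (h : ∫⁻ x in s, ENNReal.ofReal (f x) ∂μ ≤ ENNReal.ofReal c * μ s) :
    ⨍ x in s, f x ∂μ ≤ c := by
  rw [setAverage_eq, smul_eq_mul, integral_eq_lintegral_of_nonneg_ae
    (Filter.Eventually.of_forall hf₀) hf.aestronglyMeasurable]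
  rcases (measureReal_nonneg (μ := μ) (s := s)).eq_or_lt with h0 | hpos
  · rw [← h0, inv_zero, zero_mul]
    exact hc
  rw [inv_mul_le_iff₀ hpos, measureReal_def, ← ENNReal.toReal_ofReal hc, ← ENNReal.toReal_mul]
  exact ENNReal.toReal_mono (ENNReal.mul_ne_top hs ENNReal.ofReal_ne_top) (mul_comm (μ s) _ ▸ h)

theorem setAverage_le_of_forall_le (hf : Measurable f) (hf₀ : ∀ x, 0 ≤ f x)
    (hs : μ s ≠ ∞) (hc : 0 ≤ c) (h : ∀ x ∈ s, f x ≤ c) :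
    ⨍ x in s, f x ∂μ ≤ c := by
  refine setAverage_le_of_setLIntegral_le hf hf₀ hs hc ?_
  calc ∫⁻ x in s, ENNReal.ofReal (f x) ∂μ ≤ ∫⁻ _ in s, ENNReal.ofReal c ∂μ :=
        setLIntegral_mono measurable_const fun x hx => ENNReal.ofReal_le_ofReal (h x hx)
    _ = ENNReal.ofReal c * μ s := setLIntegral_const s _

theorem mul_two_inv_pow_succ_rpow_mul_two_inv_pow_rpow {S : ℝ} (hS : 0 < S) (γ σ : ℝ) (k : ℕ) :
    (S * 2⁻¹ ^ (k + 1)) ^ γ * ((2⁻¹ : ℝ) ^ k) ^ σ = 2 ^ (-γ) * S ^ γ * (2 ^ (-(γ + σ))) ^ k := by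
  have h2 : ∀ j : ℕ, (2 : ℝ)⁻¹ ^ j = 2 ^ (-(j : ℝ)) := fun j => by
    rw [Real.rpow_neg zero_le_two, Real.rpow_natCast, inv_pow]
  rw [h2, h2, Real.mul_rpow hS.le (by positivity), ← Real.rpow_mul zero_le_two,
    ← Real.rpow_mul zero_le_two, ← Real.rpow_natCast, ← Real.rpow_mul zero_le_two]
  have : (2 : ℝ) ^ (-((k + 1 : ℕ) : ℝ) * γ) * 2 ^ (-(k : ℝ) * σ) =
      2 ^ (-γ) * 2 ^ (-(γ + σ) * k) := by
    rw [← Real.rpow_add two_pos, ← Real.rpow_add two_pos]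
    push_cast
    ring_nf
  linear_combination S ^ γ * this

theorem exists_le_mul_two_inv_pow_and_rpow_le {a S γ : ℝ} (hγ : γ < 0) (ha : 0 ≤ a) (haS : a ≤ S)
    (hS : 0 < S) : ∃ k : ℕ, a ≤ S * 2⁻¹ ^ k ∧ a ^ γ ≤ (S * 2⁻¹ ^ (k + 1)) ^ γ := by
  rcases ha.eq_or_lt with rfl | hpos
  · exact ⟨0, by positivity, by rw [Real.zero_rpow hγ.ne]; positivity⟩
  obtain ⟨k, hk1, hk⟩ := exists_nat_pow_near_of_lt_one (div_pos hpos hS)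
    ((div_le_one hS).2 haS) (by norm_num : (0 : ℝ) < 2⁻¹) (by norm_num)
  exact ⟨k, (div_le_iff₀' hS).1 hk,
    Real.rpow_le_rpow_of_nonpos (by positivity) ((lt_div_iff₀' hS).1 hk1).le hγ.le⟩

theorem setLIntegral_rpow_le_of_measure_le (hf : Measurable f) (hf₀ : ∀ x, 0 ≤ f x)
    {γ σ S D : ℝ} (hγ : γ < 0) (hγσ : 0 < γ + σ) (hS : 0 < S) (hfS : ∀ x ∈ s, f x ≤ S)
    (hD : ∀ t, 0 < t → t ≤ S →
      μ (s ∩ {x | f x ≤ t}) ≤ ENNReal.ofReal (D * (t / S) ^ σ) * μ s) :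
    ∫⁻ x in s, ENNReal.ofReal (f x ^ γ) ∂μ ≤
      ENNReal.ofReal (2 ^ (-γ) * (1 - 2 ^ (-(γ + σ)))⁻¹ * D * S ^ γ) * μ s := by
  set t : ℕ → ℝ := fun k => S * 2⁻¹ ^ k
  have ht : ∀ k, 0 < t k := fun k => by positivity
  have htS : ∀ k, t k ≤ S := fun k =>
    mul_le_of_le_one_right hS.le (pow_le_one₀ (by norm_num) (by norm_num))
  have hmeas : ∀ k, MeasurableSet {x | f x ≤ t k} := fun k => measurableSet_le hf measurable_const
  set q : ℝ := 2 ^ (-(γ + σ))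
  have hq : q < 1 := Real.rpow_lt_one_of_one_lt_of_neg (by norm_num) (by linarith)
  have hpoint : ∀ x ∈ s, ENNReal.ofReal (f x ^ γ) ≤
      ∑' k, {x | f x ≤ t k}.indicator (fun _ => ENNReal.ofReal (t (k + 1) ^ γ)) x := by
    intro x hx
    obtain ⟨k, hk, hγk⟩ := exists_le_mul_two_inv_pow_and_rpow_le hγ (hf₀ x) (hfS x hx) hS
    calc ENNReal.ofReal (f x ^ γ) ≤ ENNReal.ofReal (t (k + 1) ^ γ) := ENNReal.ofReal_le_ofReal hγk
      _ = {x | f x ≤ t k}.indicator (fun _ => ENNReal.ofReal (t (k + 1) ^ γ)) x :=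
          (Set.indicator_of_mem (show x ∈ {x | f x ≤ t k} from hk)
            (fun _ => ENNReal.ofReal (t (k + 1) ^ γ))).symm
      _ ≤ _ := ENNReal.le_tsum k
  calc ∫⁻ x in s, ENNReal.ofReal (f x ^ γ) ∂μ
      ≤ ∫⁻ x in s, ∑' k, {x | f x ≤ t k}.indicator (fun _ => ENNReal.ofReal (t (k + 1) ^ γ)) x ∂μ :=
        setLIntegral_mono (Measurable.tsum fun k => measurable_const.indicator (hmeas k)) hpoint
    _ = ∑' k, ENNReal.ofReal (t (k + 1) ^ γ) * μ (s ∩ {x | f x ≤ t k}) := by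
        rw [lintegral_tsum fun k => (measurable_const.indicator (hmeas k)).aemeasurable]
        congr 1 with k
        rw [lintegral_indicator_const (hmeas k), Measure.restrict_apply (hmeas k), Set.inter_comm]
    _ ≤ ∑' k, ENNReal.ofReal (t (k + 1) ^ γ) * (ENNReal.ofReal (D * (t k / S) ^ σ) * μ s) :=
        ENNReal.tsum_le_tsum fun k => mul_le_mul_right (hD _ (ht k) (htS k)) _
    _ = ∑' k, ENNReal.ofReal (2 ^ (-γ) * D * S ^ γ) * ENNReal.ofReal q ^ k * μ s := by
        congr 1 with k
        have hk : t (k + 1) ^ γ * (D * (t k / S) ^ σ) = 2 ^ (-γ) * D * S ^ γ * q ^ k := by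
          rw [mul_div_cancel_left₀ _ hS.ne', mul_left_comm,
            mul_two_inv_pow_succ_rpow_mul_two_inv_pow_rpow hS]
          ring
        rw [← mul_assoc, ← ENNReal.ofReal_mul (Real.rpow_nonneg (ht _).le _), hk,
          ENNReal.ofReal_mul' (by positivity), ENNReal.ofReal_pow (by positivity)]
    _ = _ := by
        rw [ENNReal.tsum_mul_right, ENNReal.tsum_mul_left, ENNReal.tsum_geometric,
          ← ENNReal.ofReal_one, ← ENNReal.ofReal_sub _ (by positivity),
          ← ENNReal.ofReal_inv_of_pos (by linarith),
          ← ENNReal.ofReal_mul' (inv_nonneg.2 (by linarith))]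
        ring_nf

end Average

section InfDist

variable {X : Type*} [MetricSpace X]

theorem exists_pairwiseDisjoint_ball_subset_biUnion_closedBall {F : Set X} (hFc : IsCompact F)
    (hFne : F.Nonempty) (x : X) {r t : ℝ} (ht : 0 < t) :
    ∃ u ⊆ F ∩ closedBall x (r + t), u.PairwiseDisjoint (ball · (t / 2)) ∧
      ball x r ∩ {y | infDist y F ≤ t} ⊆ ⋃ b ∈ u, closedBall b (3 * t) := by
  obtain ⟨u, huT, hdisj, hcov⟩ :=
    Vitali.exists_disjoint_subfamily_covering_enlargement_closedBall (F ∩ closedBall x (r + t)) id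
      (fun _ => t / 2) (t / 2) (fun _ _ => le_rfl) 4 (by norm_num)
  refine ⟨u, huT, hdisj.mono fun _ => ball_subset_closedBall, ?_⟩
  rintro y ⟨hyx, hyF⟩
  obtain ⟨z, hzF, hyz⟩ := hFc.exists_infDist_eq_dist hFne y
  have hzx : z ∈ closedBall x (r + t) := mem_closedBall.2 <| by
    linarith [dist_triangle z y x, dist_comm z y, mem_ball.1 hyx, hyF.out]
  obtain ⟨b, hbu, hzb⟩ := hcov z ⟨hzF, hzx⟩
  have : dist z b ≤ 4 * (t / 2) := mem_closedBall.1 (hzb (mem_closedBall_self (by positivity)))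
  exact Set.mem_biUnion hbu (mem_closedBall.2 (by linarith [dist_triangle y z b, hyF.out]))

variable [MeasurableSpace X] [BorelSpace X]

theorem measurable_infDist_rpow (F : Set X) (γ : ℝ) : Measurable fun y => infDist y F ^ γ :=
  (continuous_infDist_pt F).measurable.pow_const γ

variable [ProperSpace X] {μ : Measure X} [IsFiniteMeasureOnCompacts μ] {F : Set X} {γ r : ℝ}
  {x : X}

theorem setAverage_rpow_infDist_le_of_nonneg (hγ : 0 ≤ γ) (hr : 0 < r) :
    ⨍ y in ball x r, infDist y F ^ γ ∂μ ≤ (r + infDist x F) ^ γ := by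
  refine setAverage_le_of_forall_le (measurable_infDist_rpow F γ)
    (fun _ => Real.rpow_nonneg infDist_nonneg γ) measure_ball_lt_top.ne
    (Real.rpow_nonneg (add_nonneg hr.le infDist_nonneg) γ) fun y hy => ?_
  have : infDist y F ≤ infDist x F + dist y x := infDist_le_infDist_add_dist
  exact Real.rpow_le_rpow infDist_nonneg (by linarith [mem_ball.1 hy]) hγ

theorem setAverage_rpow_infDist_le_of_le (hγ : γ ≤ 0) (hr : 0 < r) (hx : 2 * r ≤ infDist x F) :
    ⨍ y in ball x r, infDist y F ^ γ ∂μ ≤ 3 ^ (-γ) * (r + infDist x F) ^ γ := by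
  have hρ : 0 < (r + infDist x F) / 3 := by linarith [infDist_nonneg (x := x) (s := F)]
  have hscale : ((r + infDist x F) / 3) ^ γ = 3 ^ (-γ) * (r + infDist x F) ^ γ := by
    rw [Real.div_rpow (by linarith) zero_le_three, Real.rpow_neg zero_le_three, div_eq_inv_mul]
  refine hscale ▸ setAverage_le_of_forall_le (measurable_infDist_rpow F γ)
    (fun _ => Real.rpow_nonneg infDist_nonneg γ) measure_ball_lt_top.ne
    (Real.rpow_nonneg hρ.le γ) fun y hy => ?_
  have : infDist x F ≤ infDist y F + dist x y := infDist_le_infDist_add_dist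
  have hxy : dist x y < r := by rw [dist_comm]; exact mem_ball.1 hy
  exact Real.rpow_le_rpow_of_nonpos hρ (by linarith) hγ

end InfDist

section Thickening

variable {E : Type*} [NormedAddCommGroup E] [NormedSpace ℝ E] [FiniteDimensional ℝ E]
  [MeasurableSpace E] [BorelSpace E]

def HasThickeningBound (μ : Measure E) (F : Set E) (A σ : ℝ) : Prop :=
  ∀ x r t, 0 < t → t ≤ r →
    μ (ball x r ∩ {y | infDist y F ≤ t}) ≤ ENNReal.ofReal (A * (t / r) ^ σ) * μ (ball x r)

theorem MeasureTheory.Measure.addHaar_closedBall_mul_eq_mul_ball (μ : Measure E)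
    [μ.IsAddHaarMeasure] (x y : E) {c r : ℝ} (hc : 0 ≤ c) (hr : 0 < r) :
    μ (closedBall y (c * r)) = ENNReal.ofReal (c ^ Module.finrank ℝ E) * μ (ball x r) := by
  rw [Measure.addHaar_closedBall_mul μ y hc hr.le, Measure.addHaar_closedBall μ 0 hr.le,
    Measure.addHaar_ball_of_pos μ x hr]

variable {μ : Measure E} [μ.IsAddHaarMeasure] {F : Set E} {A σ γ r : ℝ} {x : E}

theorem HasThickeningBound.setAverage_rpow_infDist_le_of_lt (hF : HasThickeningBound μ F A σ)
    (hA : 0 ≤ A) (hγ : γ < 0) (hγσ : 0 < γ + σ) (hr : 0 < r) (hx : infDist x F < 2 * r) :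
    ⨍ y in ball x r, infDist y F ^ γ ∂μ ≤
      2 ^ (-γ) * (1 - 2 ^ (-(γ + σ)))⁻¹ * (A * 3 ^ Module.finrank ℝ E) * (3 * r) ^ γ := by
  have hq : (2 : ℝ) ^ (-(γ + σ)) < 1 :=
    Real.rpow_lt_one_of_one_lt_of_neg (by norm_num) (by linarith)
  refine setAverage_le_of_setLIntegral_le (measurable_infDist_rpow F γ)
    (fun _ => Real.rpow_nonneg infDist_nonneg γ) measure_ball_lt_top.ne
    (mul_nonneg (by have := sub_pos.2 hq; positivity) (by positivity)) ?_
  refine setLIntegral_rpow_le_of_measure_le (continuous_infDist_pt F).measurable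
    (fun _ => infDist_nonneg) hγ hγσ (by positivity) (fun y hy => ?_) fun t ht htS => ?_
  · have : infDist y F ≤ infDist x F + dist y x := infDist_le_infDist_add_dist
    linarith [mem_ball.1 hy]
  · calc μ (ball x r ∩ {y | infDist y F ≤ t})
        ≤ μ (ball x (3 * r) ∩ {y | infDist y F ≤ t}) :=
          measure_mono (Set.inter_subset_inter_left _ (ball_subset_ball (by linarith)))
      _ ≤ ENNReal.ofReal (A * (t / (3 * r)) ^ σ) * μ (closedBall x (3 * r)) :=
          (hF x _ t ht htS).trans (mul_le_mul_right (measure_mono ball_subset_closedBall) _)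
      _ = ENNReal.ofReal (A * 3 ^ Module.finrank ℝ E * (t / (3 * r)) ^ σ) * μ (ball x r) := by
          rw [Measure.addHaar_closedBall_mul_eq_mul_ball μ x x zero_le_three hr, ← mul_assoc,
            ← ENNReal.ofReal_mul (mul_nonneg hA (Real.rpow_nonneg (by positivity) σ))]
          ring_nf

theorem HasThickeningBound.exists_setAverage_rpow_infDist_le (hF : HasThickeningBound μ F A σ)
    (hA : 0 ≤ A) (hγσ : 0 < γ + σ) :
    ∃ K, 0 ≤ K ∧ ∀ (x : E) (r : ℝ), 0 < r →
      ⨍ y in ball x r, infDist y F ^ γ ∂μ ≤ K * (r + infDist x F) ^ γ := by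
  rcases le_or_gt 0 γ with hγ | hγ
  · exact ⟨1, zero_le_one, fun x r hr => by
      simpa using setAverage_rpow_infDist_le_of_nonneg hγ hr⟩
  set K₀ := 2 ^ (-γ) * (1 - 2 ^ (-(γ + σ)))⁻¹ * (A * 3 ^ Module.finrank ℝ E)
  have hK₀ : 0 ≤ K₀ := by
    have : (2 : ℝ) ^ (-(γ + σ)) < 1 :=
      Real.rpow_lt_one_of_one_lt_of_neg (by norm_num) (by linarith)
    have := sub_pos.2 this
    positivity
  refine ⟨K₀ + 3 ^ (-γ), by positivity, fun x r hr => ?_⟩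
  have hρ : 0 < r + infDist x F := add_pos_of_pos_of_nonneg hr infDist_nonneg
  rcases lt_or_ge (infDist x F) (2 * r) with hnear | hfar
  · calc ⨍ y in ball x r, infDist y F ^ γ ∂μ ≤ K₀ * (3 * r) ^ γ :=
          hF.setAverage_rpow_infDist_le_of_lt hA hγ hγσ hr hnear
      _ ≤ K₀ * (r + infDist x F) ^ γ :=
          mul_le_mul_of_nonneg_left (Real.rpow_le_rpow_of_nonpos hρ (by linarith) hγ.le) hK₀
      _ ≤ (K₀ + 3 ^ (-γ)) * (r + infDist x F) ^ γ := by
          gcongr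
          exact le_add_of_nonneg_right (by positivity)
  · calc ⨍ y in ball x r, infDist y F ^ γ ∂μ ≤ 3 ^ (-γ) * (r + infDist x F) ^ γ :=
          setAverage_rpow_infDist_le_of_le hγ.le hr hfar
      _ ≤ (K₀ + 3 ^ (-γ)) * (r + infDist x F) ^ γ := by
          gcongr
          exact le_add_of_nonneg_left hK₀

end Thickening

section MSet

variable {n : ℕ} {m C : ℝ} {F : Set (EuclideanSpace ℝ (Fin n))}

theorem IsMSet.hausdorffMeasure_lt_top (hF : IsMSet m C F) (hFc : IsCompact F)
    (hD : 0 < diam F) : μH[m] F < ∞ := by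
  obtain ⟨T, hTF, hT, hFT⟩ := hFc.finite_cover_balls hD
  have hcover : F ⊆ ⋃ z ∈ T, ball z (diam F) ∩ F := fun y hy => by
    obtain ⟨z, hz, hyz⟩ := Set.mem_iUnion₂.1 (hFT hy)
    exact Set.mem_biUnion hz ⟨hyz, hy⟩
  exact (measure_mono hcover).trans_lt <| measure_biUnion_lt_top hT fun z hz =>
    (hF.2 z (hTF hz) _ hD le_rfl).2.trans ENNReal.ofReal_lt_top

theorem IsMSet.exists_hausdorffMeasure_inter_closedBall_le (hF : IsMSet m C F) (hm : 0 ≤ m)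
    (hFc : IsCompact F) (hD : 0 < diam F) :
    ∃ C', 0 ≤ C' ∧ ∀ z R, 0 < R → μH[m] (F ∩ closedBall z R) ≤ ENNReal.ofReal (C' * R ^ m) := by
  set M := (μH[m] F).toReal
  refine ⟨C * 3 ^ m + M * (3 / diam F) ^ m, by have := hF.1; positivity, fun z R hR => ?_⟩
  rcases (F ∩ closedBall z R).eq_empty_or_nonempty with he | ⟨w, hwF, hwz⟩
  · simp [he]
  rcases le_or_gt (3 * R) (diam F) with hsmall | hlarge
  · have hsub : F ∩ closedBall z R ⊆ ball w (3 * R) ∩ F := fun y ⟨hyF, hyz⟩ => by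
      refine ⟨mem_ball.2 ?_, hyF⟩
      linarith [dist_triangle y z w, mem_closedBall.1 hyz, mem_closedBall'.1 hwz]
    calc μH[m] (F ∩ closedBall z R) ≤ μH[m] (ball w (3 * R) ∩ F) := measure_mono hsub
      _ ≤ ENNReal.ofReal (C * (3 * R) ^ m) := (hF.2 w hwF _ (by positivity) hsmall).2.le
      _ ≤ ENNReal.ofReal ((C * 3 ^ m + M * (3 / diam F) ^ m) * R ^ m) := by
          refine ENNReal.ofReal_le_ofReal ?_
          rw [Real.mul_rpow zero_le_three hR.le]
          nlinarith [show 0 ≤ M * (3 / diam F) ^ m * R ^ m by positivity]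
  · have hone : 1 ≤ (3 / diam F) ^ m * R ^ m := by
      rw [← Real.mul_rpow (by positivity) hR.le]
      exact Real.one_le_rpow (by rw [div_mul_eq_mul_div, le_div_iff₀ hD]; linarith) hm
    calc μH[m] (F ∩ closedBall z R) ≤ μH[m] F := measure_mono Set.inter_subset_left
      _ = ENNReal.ofReal M :=
          (ENNReal.ofReal_toReal (hF.hausdorffMeasure_lt_top hFc hD).ne).symm
      _ ≤ ENNReal.ofReal ((C * 3 ^ m + M * (3 / diam F) ^ m) * R ^ m) := by
          gcongr
          have := hF.1
          nlinarith [ENNReal.toReal_nonneg (a := μH[m] F),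
            show 0 ≤ C * 3 ^ m * R ^ m by positivity]

theorem IsMSet.encard_mul_le (hF : IsMSet m C F) (hFc : IsClosed F)
    {u : Set (EuclideanSpace ℝ (Fin n))} {s : ℝ} (huF : u ⊆ F)
    (hu : u.PairwiseDisjoint (ball · s)) (hs : 0 < s) (hsD : s ≤ diam F) :
    u.encard * ENNReal.ofReal (C⁻¹ * s ^ m) ≤ μH[m] (⋃ b ∈ u, ball b s ∩ F) := by
  rw [measure_biUnion
    (hu.countable_of_isOpen (fun _ _ => isOpen_ball) fun _ _ => nonempty_ball.2 hs)
    (hu.mono fun _ => Set.inter_subset_left)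
    fun _ _ => isOpen_ball.measurableSet.inter hFc.measurableSet, ← ENNReal.tsum_set_const]
  exact ENNReal.tsum_le_tsum fun b => (hF.2 b (huF b.2) s hs hsD).1.le

theorem IsMSet.encard_le_of_pairwiseDisjoint (hF : IsMSet m C F) (hFc : IsClosed F) {C' : ℝ}
    (hup : ∀ z R, 0 < R → μH[m] (F ∩ closedBall z R) ≤ ENNReal.ofReal (C' * R ^ m))
    {u : Set (EuclideanSpace ℝ (Fin n))} {x : EuclideanSpace ℝ (Fin n)} {r t : ℝ}
    (huT : u ⊆ F ∩ closedBall x (r + t)) (hu : u.PairwiseDisjoint (ball · (t / 2)))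
    (ht : 0 < t) (htr : t ≤ r) (htD : t ≤ 2 * diam F) :
    (u.encard : ℝ≥0∞) ≤ ENNReal.ofReal (C * C' * 6 ^ m * (t / r) ^ (-m)) := by
  have hC := hF.1
  have hr : 0 < r := ht.trans_le htr
  have hpack : u.encard * ENNReal.ofReal (C⁻¹ * (t / 2) ^ m) ≤
      ENNReal.ofReal (C' * (3 * r) ^ m) := by
    refine (hF.encard_mul_le hFc (fun b hb => (huT hb).1) hu (by positivity)
      (by linarith)).trans ((measure_mono ?_).trans (hup x (3 * r) (by positivity)))
    refine Set.iUnion₂_subset fun b hb y ⟨hyb, hyF⟩ => ⟨hyF, mem_closedBall.2 ?_⟩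
    linarith [dist_triangle y b x, mem_ball.1 hyb, mem_closedBall.1 (huT hb).2]
  have hratio : C' * (3 * r) ^ m / (C⁻¹ * (t / 2) ^ m) = C * C' * 6 ^ m * (t / r) ^ (-m) := by
    have h : (6 : ℝ) ^ m * (t / r) ^ (-m) * (t / 2) ^ m = (3 * r) ^ m := by
      rw [Real.rpow_neg (by positivity), ← Real.inv_rpow (by positivity),
        ← Real.mul_rpow (by norm_num) (by positivity),
        ← Real.mul_rpow (by positivity) (by positivity)]
      congr 1
      field_simp
      ring
    rw [div_eq_iff (by positivity), ← h]
    field_simp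
  rw [← hratio, ENNReal.ofReal_div_of_pos (by positivity), ENNReal.le_div_iff_mul_le
    (Or.inl (ENNReal.ofReal_pos.2 (by positivity)).ne') (Or.inl ENNReal.ofReal_ne_top)]
  exact hpack

theorem IsMSet.exists_volume_inter_infDist_le_of_le_diam (hF : IsMSet m C F) (hm : 0 ≤ m)
    (hFc : IsCompact F) (hFne : F.Nonempty) :
    ∃ A, 0 ≤ A ∧ ∀ x r t, 0 < t → t ≤ r → t ≤ 2 * diam F →
      volume (ball x r ∩ {y | infDist y F ≤ t}) ≤
        ENNReal.ofReal (A * (t / r) ^ ((n : ℝ) - m)) * volume (ball x r) := by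
  rcases (diam_nonneg (s := F)).eq_or_lt with hD | hD
  · exact ⟨0, le_rfl, fun x r t ht _ htD => by linarith⟩
  obtain ⟨C', hC', hup⟩ := hF.exists_hausdorffMeasure_inter_closedBall_le hm hFc hD
  have hC := hF.1
  refine ⟨C * C' * 6 ^ m * 3 ^ n, by positivity, fun x r t ht htr htD => ?_⟩
  have hr : 0 < r := ht.trans_le htr
  obtain ⟨u, huT, hu, hcover⟩ :=
    exists_pairwiseDisjoint_ball_subset_biUnion_closedBall hFc hFne x ht
  have hpow : (t / r) ^ (-m) * (3 * t / r) ^ n = 3 ^ n * (t / r) ^ ((n : ℝ) - m) := by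
    rw [mul_div_assoc, mul_pow, ← Real.rpow_natCast (t / r), mul_left_comm,
      ← Real.rpow_add (by positivity), neg_add_eq_sub]
  calc volume (ball x r ∩ {y | infDist y F ≤ t})
      ≤ ∑' b : u, volume (closedBall (b : EuclideanSpace ℝ (Fin n)) (3 * t / r * r)) := by
        rw [div_mul_cancel₀ _ hr.ne']
        exact (measure_mono hcover).trans (measure_biUnion_le _
          (hu.countable_of_isOpen (fun _ _ => isOpen_ball) fun _ _ => nonempty_ball.2
            (by positivity)) _)
    _ = u.encard * (ENNReal.ofReal ((3 * t / r) ^ n) * volume (ball x r)) := by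
        simp only [Measure.addHaar_closedBall_mul_eq_mul_ball volume x _
          (by positivity : 0 ≤ 3 * t / r) hr, finrank_euclideanSpace_fin, ENNReal.tsum_set_const]
    _ ≤ ENNReal.ofReal (C * C' * 6 ^ m * (t / r) ^ (-m)) *
          (ENNReal.ofReal ((3 * t / r) ^ n) * volume (ball x r)) := by
        gcongr
        exact hF.encard_le_of_pairwiseDisjoint hFc.isClosed hup huT hu ht htr htD
    _ = ENNReal.ofReal (C * C' * 6 ^ m * 3 ^ n * (t / r) ^ ((n : ℝ) - m)) * volume (ball x r) := by
        rw [← mul_assoc, ← ENNReal.ofReal_mul (by positivity), mul_assoc _ ((t / r) ^ (-m)), hpow]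
        ring_nf

theorem IsMSet.exists_hasThickeningBound (hF : IsMSet m C F) (hm : 0 ≤ m) (hFc : IsCompact F)
    (hFne : F.Nonempty) : ∃ A, 0 ≤ A ∧ HasThickeningBound volume F A (n - m) := by
  obtain ⟨A, hA, hlarge⟩ := hF.exists_volume_inter_infDist_le_of_le_diam hm hFc hFne
  obtain ⟨z, hz⟩ := hFne
  refine ⟨A + 2 ^ n, by positivity, fun x r t ht htr => ?_⟩
  have hr : 0 < r := ht.trans_le htr
  have hq : 0 ≤ (t / r) ^ ((n : ℝ) - m) := by positivity
  rcases le_or_gt t (2 * diam F) with htD | htD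
  · refine (hlarge x r t ht htr htD).trans ?_
    gcongr
    exact le_add_of_nonneg_right (by positivity)
  have hsub : {y | infDist y F ≤ t} ⊆ closedBall z (2 * t / r * r) := fun y hy => by
    rw [div_mul_cancel₀ _ hr.ne', mem_closedBall]
    linarith [dist_le_infDist_add_diam (x := y) hFc.isBounded hz, hy.out]
  calc volume (ball x r ∩ {y | infDist y F ≤ t})
      ≤ volume (closedBall z (2 * t / r * r)) :=
        measure_mono (Set.inter_subset_right.trans hsub)
    _ = ENNReal.ofReal ((2 * t / r) ^ n) * volume (ball x r) := by
        rw [Measure.addHaar_closedBall_mul_eq_mul_ball volume x z (by positivity) hr,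
          finrank_euclideanSpace_fin]
    _ ≤ ENNReal.ofReal ((A + 2 ^ n) * (t / r) ^ ((n : ℝ) - m)) * volume (ball x r) := by
        gcongr
        have hqm : (t / r) ^ m ≤ 1 :=
          Real.rpow_le_one (by positivity) ((div_le_one hr).2 htr) hm
        calc (2 * t / r) ^ n = 2 ^ n * ((t / r) ^ ((n : ℝ) - m) * (t / r) ^ m) := by
              rw [← Real.rpow_add (by positivity), sub_add_cancel, Real.rpow_natCast,
                mul_div_assoc, mul_pow]
          _ ≤ (A + 2 ^ n) * (t / r) ^ ((n : ℝ) - m) := by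
              have := mul_le_mul_of_nonneg_left (mul_le_of_le_one_right hq hqm)
                (by positivity : (0 : ℝ) ≤ 2 ^ n)
              nlinarith [mul_nonneg hA hq]

end MSet

theorem mul_rpow_le_of_le_mul_rpow {a b K₁ K₂ ρ μ p : ℝ} (hp : 1 < p) (hρ : 0 < ρ)
    (hK₁ : 0 ≤ K₁) (hK₂ : 0 ≤ K₂) (hb : 0 ≤ b) (ha : a ≤ K₁ * ρ ^ μ)
    (hb' : b ≤ K₂ * ρ ^ (-(μ / (p - 1)))) :
    a * b ^ (p - 1) ≤ K₁ * K₂ ^ (p - 1) := by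
  have hp' : p - 1 ≠ 0 := by linarith
  calc a * b ^ (p - 1) ≤ K₁ * ρ ^ μ * (K₂ * ρ ^ (-(μ / (p - 1)))) ^ (p - 1) :=
        mul_le_mul ha (Real.rpow_le_rpow hb hb' (by linarith)) (by positivity) (by positivity)
    _ = K₁ * K₂ ^ (p - 1) := by
        rw [Real.mul_rpow hK₂ (by positivity), ← Real.rpow_mul hρ.le, neg_mul,
          div_mul_cancel₀ _ hp', Real.rpow_neg hρ.le]
        field_simp

theorem dist_rpow_muckenhaupt_general {n : ℕ} (m C μ p : ℝ) (hm : 0 < m)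
    (Ω : Set (EuclideanSpace ℝ (Fin n))) (hΩne : Ω.Nonempty)
    (hΩb : Bornology.IsBounded Ω)
    (hF : IsMSet m C (frontier Ω)) (hp : 1 < p)
    (hμl : -(n - m) < μ) (hμr : μ < (n - m) * (p - 1)) :
    ∃ K : ℝ, ∀ (x : EuclideanSpace ℝ (Fin n)) (r : ℝ), 0 < r →
      (((volume (Metric.ball x r)).toReal)⁻¹ *
          ∫ y in Metric.ball x r, Metric.infDist y (frontier Ω) ^ μ) *
        (((volume (Metric.ball x r)).toReal)⁻¹ *
          ∫ y in Metric.ball x r, Metric.infDist y (frontier Ω) ^ (-(μ / (p - 1))))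
            ^ (p - 1)
        ≤ K := by
  -- the range allowed for `μ` is empty unless `m < n`
  have hmn : m < n := by nlinarith
  have : Nonempty (Fin n) := ⟨⟨0, by exact_mod_cast hm.trans hmn⟩⟩
  have hFne : (frontier Ω).Nonempty :=
    nonempty_frontier_iff.2 ⟨hΩne, fun h => NormedSpace.unbounded_univ ℝ _ (h ▸ hΩb)⟩
  have hFc : IsCompact (frontier Ω) :=
    isCompact_of_isClosed_isBounded isClosed_frontier (hΩb.closure.subset frontier_subset_closure)
  obtain ⟨A, hA, hthick⟩ := hF.exists_hasThickeningBound hm.le hFc hFne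
  obtain ⟨K₁, hK₁, h₁⟩ := hthick.exists_setAverage_rpow_infDist_le (γ := μ) hA (by linarith)
  obtain ⟨K₂, hK₂, h₂⟩ := hthick.exists_setAverage_rpow_infDist_le (γ := -(μ / (p - 1))) hA
    (by linarith [(div_lt_iff₀ (sub_pos.2 hp)).2 hμr])
  refine ⟨K₁ * K₂ ^ (p - 1), fun x r hr => ?_⟩
  simp only [← measureReal_def, ← smul_eq_mul, ← setAverage_eq]
  exact mul_rpow_le_of_le_mul_rpow hp (add_pos_of_pos_of_nonneg hr infDist_nonneg) hK₁ hK₂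
    (setAverage_nonneg fun _ => Real.rpow_nonneg infDist_nonneg _) (h₁ x r hr) (h₂ x r hr)

/-- If `Ω ⊂ ℝⁿ` is a bounded domain whose boundary is an m-set, `0 < m ≤ n`, and
`−(n−m) < μ < (n−m)(p−1)` with `1 < p < ∞`, then the weight `d(x)^μ`, with
`d = dist(·, ∂Ω)`, belongs to the Muckenhaupt class `A_p`: the `A_p` quotient over
all balls is uniformly bounded. -/
theorem dist_rpow_muckenhaupt {n : ℕ} (m C μ p : ℝ) (hm : 0 < m) (hmn : m ≤ n)
    (Ω : Set (EuclideanSpace ℝ (Fin n))) (hΩo : IsOpen Ω) (hΩne : Ω.Nonempty)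
    (hΩb : Bornology.IsBounded Ω) (hΩc : IsConnected Ω)
    (hF : IsMSet m C (frontier Ω)) (hp : 1 < p)
    (hμl : -(n - m) < μ) (hμr : μ < (n - m) * (p - 1)) :
    ∃ K : ℝ, ∀ (x : EuclideanSpace ℝ (Fin n)) (r : ℝ), 0 < r →
      (((volume (Metric.ball x r)).toReal)⁻¹ *
          ∫ y in Metric.ball x r, Metric.infDist y (frontier Ω) ^ μ) *
        (((volume (Metric.ball x r)).toReal)⁻¹ *
          ∫ y in Metric.ball x r, Metric.infDist y (frontier Ω) ^ (-(μ / (p - 1))))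
            ^ (p - 1)
        ≤ K :=
  dist_rpow_muckenhaupt_general m C μ p hm Ω hΩne hΩb hF hp hμl hμr
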